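/- If λ ∈ P satisfies 0 < |⟨c,λ⟩| < κ*, then λ is not regular; that is, there exist w ∈ W and i ∈ I with ⟨h_i, wλ⟩ = 0. -/

import Mathlib

open scoped BigOperators

namespace AffineKM

/-- The multiplicative group structure on `AddAut M` that Mathlib provided in the older
version (composition as multiplication); Mathlib now makes `AddAut M` an additive group. -/
instance addAutMulGroup (M : Type*) [Add M] : Group (AddAut M) where
  mul g h := AddEquiv.trans h g
  one := AddEquiv.refl _
  inv := AddEquiv.symm
  mul_assoc _ _ _ := rfl
  one_mul _ := rfl
  mul_one _ := rfl
  inv_mul_cancel := AddEquiv.self_trans_symm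

/-- An indecomposable generalized Cartan matrix of affine type, together with a
choice of positive integers `(a_i)` and `(a_i^∨)` annihilating it on the right
and on the left. -/
structure AffineData (I : Type) [Fintype I] [DecidableEq I] where
  a : I → I → ℤ
  apos : I → ℤ
  avee : I → ℤ
  diag : ∀ i, a i i = 2
  offdiag_nonpos : ∀ i j, i ≠ j → a i j ≤ 0
  zero_iff : ∀ i j, a i j = 0 ↔ a j i = 0
  connected : ∀ s : Set I, s.Nonempty → sᶜ.Nonempty → ∃ i ∈ s, ∃ j ∈ sᶜ, a i j ≠ 0
  apos_pos : ∀ i, 0 < apos i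
  avee_pos : ∀ i, 0 < avee i
  row_zero : ∀ i, (∑ j, a i j * apos j) = 0
  col_zero : ∀ j, (∑ i, avee i * a i j) = 0

variable {I : Type} [Fintype I] [DecidableEq I]

/-- The weight lattice `P`, free on the `Λ_i` and the `α_i`: the first component
records the coordinates with respect to the basis `{Λ_i}`, the second component the
coordinates with respect to the basis `{α_i}`. -/
abbrev P (I : Type) := (I → ℤ) × (I → ℤ)

/-- The fundamental weight `Λ_i`. -/
def Lambda (i : I) : P I := (Pi.single i 1, 0)

/-- The simple root `α_i`. -/
def alphaRt (i : I) : P I := (0, Pi.single i 1)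

/-- A weight lies in `Q = ⊕ ℤα_i` iff its `Λ`-coordinates vanish. -/
def inQ (lam : P I) : Prop := lam.1 = 0

namespace AffineData

variable (D : AffineData I)

/-- The pairing `⟨h_i, λ⟩` with the simple coroot `h_i`. -/
def coroot (i : I) (lam : P I) : ℤ := lam.1 i + ∑ j, D.a i j * lam.2 j

lemma coroot_add (i : I) (x y : P I) :
    D.coroot i (x + y) = D.coroot i x + D.coroot i y := by
  simp only [coroot, Prod.fst_add, Prod.snd_add, Pi.add_apply, mul_add,
    Finset.sum_add_distrib]
  ring

lemma coroot_zsmul (i : I) (z : ℤ) (x : P I) :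
    D.coroot i (z • x) = z * D.coroot i x := by
  simp only [coroot, Prod.smul_fst, Prod.smul_snd, Pi.smul_apply, smul_eq_mul,
    mul_add, Finset.mul_sum]
  congr 1
  apply Finset.sum_congr rfl
  intro j _
  ring

lemma coroot_alpha_self (i : I) : D.coroot i (alphaRt i) = 2 := by
  simp only [coroot, alphaRt, Pi.zero_apply, zero_add]
  rw [Finset.sum_eq_single i]
  · simp [D.diag]
  · intro j _ hj
    simp [Pi.single_apply, Ne.symm hj]
  · intro h; exact absurd (Finset.mem_univ i) h

lemma refl_aux (i : I) (lam : P I) :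
    (lam - D.coroot i lam • alphaRt i)
      - D.coroot i (lam - D.coroot i lam • alphaRt i) • alphaRt i = lam := by
  have h1 : D.coroot i (lam - D.coroot i lam • alphaRt i)
      = - D.coroot i lam := by
    have h0 := D.coroot_add i (lam - D.coroot i lam • alphaRt i)
      (D.coroot i lam • alphaRt i)
    simp only [sub_add_cancel] at h0
    have h2 : D.coroot i (D.coroot i lam • alphaRt i) = 2 * D.coroot i lam := by
      rw [D.coroot_zsmul, D.coroot_alpha_self]; ring
    omega
  rw [h1, neg_zsmul]
  abel

/-- The simple reflection `s_i : λ ↦ λ - ⟨h_i,λ⟩ α_i`, as an automorphism of `P`. -/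
def refl (i : I) : AddAut (P I) where
  toFun lam := lam - D.coroot i lam • alphaRt i
  invFun lam := lam - D.coroot i lam • alphaRt i
  left_inv lam := D.refl_aux i lam
  right_inv lam := D.refl_aux i lam
  map_add' x y := by
    try dsimp only
    rw [D.coroot_add, add_zsmul]
    abel

/-- The affine Weyl group, as a subgroup of the automorphism group of `P`. -/
def weyl : Subgroup (AddAut (P I)) := Subgroup.closure (Set.range D.refl)

/-- The simple reflection `s_i` as an element of the Weyl group. -/
def sgen (i : I) : D.weyl := ⟨D.refl i, Subgroup.subset_closure ⟨i, rfl⟩⟩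

/-- The length of an element of the Weyl group: the minimal length of an
expression as a product of simple reflections. -/
noncomputable def len (w : D.weyl) : ℕ :=
  sInf {n | ∃ l : List I, l.length = n ∧ (w : AddAut (P I)) = (l.map D.refl).prod}

/-- The null root `δ = Σ a_i α_i`. -/
def delta : P I := (0, D.apos)

/-- The pairing `⟨c, λ⟩` with the canonical central element `c = Σ a_i^∨ h_i`. -/
def cpair (lam : P I) : ℤ := ∑ i, D.avee i * D.coroot i lam

/-- The dual Coxeter number `κ* = ⟨c, ρ⟩ = Σ a_i^∨`. -/
def kstar : ℤ := ∑ i, D.avee i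

/-- λ ∈ P is regular if `⟨c,λ⟩ ≠ 0` and `⟨h_i, wλ⟩ ≠ 0` for all `w ∈ W`, `i ∈ I`. -/
def IsRegularWt (lam : P I) : Prop :=
  D.cpair lam ≠ 0 ∧ ∀ w ∈ D.weyl, ∀ i : I, D.coroot i (w lam) ≠ 0

/-- The `W`-orbit of a weight. -/
def orb (lam : P I) : Set (P I) := {mu | ∃ w ∈ D.weyl, w lam = mu}

end AffineData

/-- The group algebra `ℤ[P]`. -/
abbrev ZP (I : Type) [Fintype I] [DecidableEq I] := AddMonoidAlgebra ℤ (P I)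

/-- The basis element `e^λ` of `ℤ[P]`. -/
noncomputable def expw (lam : P I) : ZP I := AddMonoidAlgebra.single lam 1

/-- The action of an automorphism `w` of `P` on the group algebra `ℤ[P]`,
`e^λ ↦ e^{wλ}`, as a ring homomorphism. -/
noncomputable def wact (w : AddAut (P I)) : ZP I →+* ZP I :=
  AddMonoidAlgebra.mapDomainRingHom ℤ w.toAddMonoidHom

lemma wact_single (w : AddAut (P I)) (lam : P I) (c : ℤ) :
    wact w (AddMonoidAlgebra.single lam c) = AddMonoidAlgebra.single (w lam) c := by
  simp [wact, AddMonoidAlgebra.mapDomainRingHom, Finsupp.mapDomain_single]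


namespace AffineData

variable (D : AffineData I)

lemma coroot_delta (i : I) : D.coroot i D.delta = 0 := by
  simp only [coroot, delta, Pi.zero_apply, zero_add]
  exact D.row_zero i

lemma refl_apply (i : I) (lam : P I) :
    D.refl i lam = lam - D.coroot i lam • alphaRt i := rfl

lemma refl_delta (i : I) : D.refl i D.delta = D.delta := by
  rw [refl_apply, D.coroot_delta, zero_zsmul, sub_zero]

lemma weyl_fix_delta {w : AddAut (P I)} (hw : w ∈ D.weyl) : w D.delta = D.delta := by
  induction hw using Subgroup.closure_induction with
  | mem x hx => obtain ⟨i, rfl⟩ := hx; exact D.refl_delta i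
  | one => rfl
  | mul x y hx hy ihx ihy =>
      show x (y D.delta) = D.delta
      rw [ihy, ihx]
  | inv x hx ih =>
      have : x⁻¹ (x D.delta) = x⁻¹ D.delta := by rw [ih]
      simpa [show x⁻¹ (x D.delta) = D.delta from x.symm_apply_apply D.delta] using this.symm

lemma weyl_fix_zsmul_delta {w : AddAut (P I)} (hw : w ∈ D.weyl) (n : ℤ) :
    w (n • D.delta) = n • D.delta := by
  rw [map_zsmul, D.weyl_fix_delta hw]

/-- The multiplicative set generated by the elements `e^{nδ} - 1`, `n ≥ 1`; `R ⊗_{ℤ[q,q⁻¹]} ℤ[P]`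
is realized as the localization of `ℤ[P]` at this set. -/
noncomputable def denomSet : Submonoid (ZP I) :=
  Submonoid.closure {x | ∃ n : ℤ, 0 < n ∧ x = expw (n • D.delta) - 1}

/-- `R ⊗_{ℤ[q,q⁻¹]} ℤ[P]`, realized as the localization of `ℤ[P]` at the
multiplicative set generated by the `e^{nδ} - 1`, `n ≥ 1` (note that `q = e^δ` is
already invertible in this ring). -/
noncomputable abbrev locZP := Localization D.denomSet

lemma wact_denom {w : AddAut (P I)} (hw : w ∈ D.weyl) :
    D.denomSet ≤ Submonoid.comap (wact w) D.denomSet := by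
  rw [denomSet, Submonoid.closure_le]
  intro x hx
  obtain ⟨n, hn, rfl⟩ := hx
  simp only [Submonoid.coe_comap, Set.mem_preimage, SetLike.mem_coe]
  have : wact w (expw (n • D.delta) - 1) = expw (n • D.delta) - 1 := by
    rw [map_sub, map_one, expw, wact_single, D.weyl_fix_zsmul_delta hw]
  rw [this]
  exact Submonoid.subset_closure ⟨n, hn, rfl⟩

/-- The action of `w ∈ W` on `R ⊗_{ℤ[q,q⁻¹]} ℤ[P]`. -/
noncomputable def wactM (w : D.weyl) : D.locZP →+* D.locZP :=
  IsLocalization.map (Localization D.denomSet) (wact (w : AddAut (P I)))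
    (D.wact_denom w.2)

end AffineData

/-- The projection `P = L ⊕ Q → Q`, as an additive homomorphism. -/
def projQ : P I →+ P I where
  toFun lam := (0, lam.2)
  map_zero' := rfl
  map_add' x y := by simp [Prod.ext_iff]

/-- The ring homomorphism `j_e : ℤ[P] → ℤ[Q] ⊆ ℤ[P]`, `e^{λ+α} ↦ e^α` for
`λ ∈ L`, `α ∈ Q`. -/
noncomputable def jeRing : ZP I →+* ZP I :=
  AddMonoidAlgebra.mapDomainRingHom ℤ (projQ (I := I))

/-- The ℤ-linear map `j_w : ℤ[P] → ℤ[Q] ⊆ ℤ[P]`, `e^{λ+α} ↦ e^{w(λ+α)-λ}` for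
`λ ∈ L`, `α ∈ Q`. -/
noncomputable def jmap (w : AddAut (P I)) (u : ZP I) : ZP I :=
  AddMonoidAlgebra.ofCoeff (Finsupp.mapDomain (fun mu => w mu - (mu.1, 0)) u.coeff)

namespace AffineData

variable (D : AffineData I)

lemma je_denom : D.denomSet ≤ Submonoid.comap (jeRing (I := I)) D.denomSet := by
  rw [denomSet, Submonoid.closure_le]
  intro x hx
  obtain ⟨n, hn, rfl⟩ := hx
  simp only [Submonoid.coe_comap, Set.mem_preimage, SetLike.mem_coe]
  have h1 : jeRing (expw (n • D.delta) - 1) = expw (n • D.delta) - 1 := by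
    rw [map_sub, map_one, expw, jeRing]
    have : AddMonoidAlgebra.mapDomainRingHom ℤ (projQ (I := I))
        (AddMonoidAlgebra.single (n • D.delta) 1)
        = AddMonoidAlgebra.single (projQ (n • D.delta)) (1 : ℤ) := by
      simp [AddMonoidAlgebra.mapDomainRingHom, Finsupp.mapDomain_single]
    rw [this]
    have h2 : projQ (n • D.delta) = n • D.delta := by
      show ((0 : I → ℤ), (n • D.delta).2) = n • D.delta
      simp [delta, Prod.ext_iff]
    rw [h2]
  rw [h1]
  exact Submonoid.subset_closure ⟨n, hn, rfl⟩

/-- The `R`-linear extension of `j_e` to `R ⊗_{ℤ[q,q⁻¹]} ℤ[P]`, with values in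
`R ⊗_{ℤ[q,q⁻¹]} ℤ[Q] ⊆ R ⊗_{ℤ[q,q⁻¹]} ℤ[P]`. -/
noncomputable def jeLoc : D.locZP →+* D.locZP :=
  IsLocalization.map (Localization D.denomSet) (jeRing (I := I)) D.je_denom

end AffineData



namespace AffineData

variable (D : AffineData I)

lemma coroot_sub (i : I) (x y : P I) :
    D.coroot i (x - y) = D.coroot i x - D.coroot i y := by
  have h := D.coroot_add i (x - y) y
  rw [sub_add_cancel] at h
  omega

lemma coroot_neg (i : I) (x : P I) : D.coroot i (-x) = - D.coroot i x := by
  have h := D.coroot_add i (-x) x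
  rw [neg_add_cancel] at h
  have h0 : D.coroot i (0 : P I) = 0 := by simp [coroot]
  omega

lemma coroot_alpha (i j : I) : D.coroot i (alphaRt j) = D.a i j := by
  simp only [coroot, alphaRt, Pi.zero_apply, zero_add]
  rw [Finset.sum_eq_single j]
  · simp
  · intro k _ hk; simp [Pi.single_apply, hk]
  · intro h; exact absurd (Finset.mem_univ j) h

lemma coroot_refl (i j : I) (mu : P I) :
    D.coroot i (D.refl j mu) = D.coroot i mu - D.coroot j mu * D.a i j := by
  rw [D.refl_apply, D.coroot_sub, D.coroot_zsmul, D.coroot_alpha]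

lemma refl_fst (j : I) (mu : P I) : (D.refl j mu).1 = mu.1 := by
  rw [D.refl_apply]
  show mu.1 - (D.coroot j mu • alphaRt j).1 = mu.1
  simp [alphaRt]

lemma refl_snd (j : I) (mu : P I) (i : I) :
    (D.refl j mu).2 i = mu.2 i - D.coroot j mu * (Pi.single j 1 : I → ℤ) i := by
  rw [D.refl_apply]
  show (mu.2 - (D.coroot j mu • alphaRt j).2) i = _
  simp [alphaRt, mul_comm]

lemma cpair_neg (x : P I) : D.cpair (-x) = - D.cpair x := by
  simp [cpair, D.coroot_neg, mul_neg, Finset.sum_neg_distrib]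

lemma cpair_refl (j : I) (mu : P I) : D.cpair (D.refl j mu) = D.cpair mu := by
  simp only [cpair, D.coroot_refl, mul_sub]
  rw [Finset.sum_sub_distrib]
  have h : (∑ i, D.avee i * (D.coroot j mu * D.a i j))
      = D.coroot j mu * ∑ i, D.avee i * D.a i j := by
    rw [Finset.mul_sum]; exact Finset.sum_congr rfl fun i _ => by ring
  rw [h, D.col_zero j, mul_zero, sub_zero]

lemma weyl_invariant {α : Sort*} (f : P I → α)
    (hf : ∀ j mu, f (D.refl j mu) = f mu) :
    ∀ w ∈ D.weyl, ∀ mu, f (w mu) = f mu := by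
  intro w hw
  induction hw using Subgroup.closure_induction with
  | mem x hx => obtain ⟨j, rfl⟩ := hx; exact hf j
  | one => intro mu; rfl
  | mul x y hx hy ihx ihy =>
      intro mu
      have : (x * y) mu = x (y mu) := rfl
      rw [this, ihx, ihy]
  | inv x hx ih =>
      intro mu
      have h1 := ih (x⁻¹ mu)
      have h2 : x (x⁻¹ mu) = mu := by
        have : x⁻¹ = (AddEquiv.symm x : AddAut (P I)) := rfl
        rw [this]
        exact AddEquiv.apply_symm_apply x mu
      rw [h2] at h1
      exact h1.symm

lemma fst_weyl : ∀ w ∈ D.weyl, ∀ mu : P I, (w mu).1 = mu.1 :=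
  D.weyl_invariant (fun mu => mu.1) (fun j mu => D.refl_fst j mu)

lemma cpair_weyl : ∀ w ∈ D.weyl, ∀ mu, D.cpair (w mu) = D.cpair mu :=
  D.weyl_invariant D.cpair D.cpair_refl

/-- The transposed affine datum. -/
def transpose : AffineData I where
  a i j := D.a j i
  apos := D.avee
  avee := D.apos
  diag i := D.diag i
  offdiag_nonpos i j h := D.offdiag_nonpos j i (Ne.symm h)
  zero_iff i j := D.zero_iff j i
  connected s hs hsc := by
    obtain ⟨i, hi, j, hj, hne⟩ := D.connected s hs hsc
    exact ⟨i, hi, j, hj, fun h0 => hne ((D.zero_iff i j).mpr h0)⟩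
  apos_pos := D.avee_pos
  avee_pos := D.apos_pos
  row_zero i := by
    rw [← D.col_zero i]; exact Finset.sum_congr rfl fun j _ => mul_comm _ _
  col_zero j := by
    rw [← D.row_zero j]; exact Finset.sum_congr rfl fun i _ => mul_comm _ _

end AffineData


namespace AffineData

variable (D : AffineData I)

/-- Rigidity of cycles in an affine Dynkin diagram: all edge labels along a cycle are `-1`
and the marks are constant along the cycle. -/
lemma cycle_tight {m : ℕ} (hm : 3 ≤ m) (u : ℕ → I)
    (hper : ∀ q, u (q + m) = u q)
    (hinj : ∀ q < m, ∀ q' < m, u q = u q' → q = q')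
    (he : ∀ q, D.a (u q) (u (q + 1)) ≠ 0) :
    (∀ q, D.a (u (q + 1)) (u q) = -1) ∧
    (∀ q, D.a (u (q + 1)) (u (q + 2)) = -1) ∧
    (∀ q, D.apos (u (q + 1)) = D.apos (u q)) := by
  have hm0 : 0 < m := by omega
  have uadd : ∀ k q, u (q + m * k) = u q := by
    intro k
    induction k with
    | zero => intro q; simp
    | succ k ih =>
        intro q
        have h1 : q + m * (k + 1) = (q + m * k) + m := by ring
        rw [h1, hper, ih]
  have ured : ∀ q j, u (q + j) = u (q % m + j) := by
    intro q j
    have hq := Nat.mod_add_div q m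
    have h1 : q + j = (q % m + j) + m * (q / m) := by omega
    rw [h1, uadd]
  have umod : ∀ q q', u q = u q' → q % m = q' % m := by
    intro q q' h
    refine hinj _ (Nat.mod_lt _ hm0) _ (Nat.mod_lt _ hm0) ?_
    have h1 := ured q 0
    have h2 := ured q' 0
    simp only [Nat.add_zero] at h1 h2
    rw [← h1, ← h2]; exact h
  have hne1 : ∀ q, u (q + 1) ≠ u q := by
    intro q h
    have hh := umod _ _ h
    have : q ≡ q + 1 [MOD m] := hh.symm
    have hd := (Nat.modEq_iff_dvd' (by omega)).mp this
    simp only [Nat.add_sub_cancel_left] at hd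
    have := Nat.le_of_dvd (by omega) hd
    omega
  have hne2 : ∀ q, u (q + 2) ≠ u q := by
    intro q h
    have hh := umod _ _ h
    have : q ≡ q + 2 [MOD m] := hh.symm
    have hd := (Nat.modEq_iff_dvd' (by omega)).mp this
    simp only [Nat.add_sub_cancel_left] at hd
    have := Nat.le_of_dvd (by omega) hd
    omega
  have heb : ∀ q, D.a (u (q + 1)) (u q) ≠ 0 := by
    intro q h
    exact he q ((D.zero_iff (u q) (u (q + 1))).mpr h)
  -- the per-vertex equality with slack
  have key : ∀ q, ∃ rest : ℤ, rest ≤ 0 ∧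
      D.a (u (q + 1)) (u q) * D.apos (u q)
      + D.a (u (q + 1)) (u (q + 2)) * D.apos (u (q + 2)) + rest
      = -(2 * D.apos (u (q + 1))) := by
    intro q
    set i := u (q + 1) with hi
    set n1 := u q with hn1
    set n2 := u (q + 2) with hn2
    have hn1i : n1 ≠ i := fun h => hne1 q h.symm
    have hn2i : n2 ≠ i := hne1 (q + 1)
    have hn21 : n2 ≠ n1 := hne2 q
    set f : I → ℤ := fun j => D.a i j * D.apos j with hf
    have hrow : ∑ j ∈ Finset.univ.erase i, f j = -(2 * D.apos i) := by
      have h0 := D.row_zero i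
      have h1 := Finset.sum_erase_add Finset.univ f (Finset.mem_univ i)
      have h2 : f i = 2 * D.apos i := by simp [hf, D.diag i]
      rw [h2] at h1
      have : (∑ j, f j) = 0 := h0
      omega
    have hmem1 : n1 ∈ Finset.univ.erase i := Finset.mem_erase.mpr ⟨hn1i, Finset.mem_univ _⟩
    have hmem2 : n2 ∈ (Finset.univ.erase i).erase n1 :=
      Finset.mem_erase.mpr ⟨hn21, Finset.mem_erase.mpr ⟨hn2i, Finset.mem_univ _⟩⟩
    have h1 := Finset.sum_erase_add (Finset.univ.erase i) f hmem1
    have h2 := Finset.sum_erase_add ((Finset.univ.erase i).erase n1) f hmem2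
    refine ⟨∑ j ∈ ((Finset.univ.erase i).erase n1).erase n2, f j, ?_, ?_⟩
    · apply Finset.sum_nonpos
      intro j hj
      have hji : j ≠ i := by
        have := Finset.mem_erase.mp (Finset.mem_erase.mp (Finset.mem_erase.mp hj).2).2
        exact this.1
      have ha := D.offdiag_nonpos i j (Ne.symm hji)
      have hp := D.apos_pos j
      simp only [hf]
      nlinarith
    · simp only [hf] at h1 h2 hrow ⊢
      omega
  have hfb1 : ∀ q, D.a (u (q + 1)) (u q) * D.apos (u q) ≤ -D.apos (u q) := by
    intro q
    have ha := D.offdiag_nonpos (u (q + 1)) (u q) (hne1 q)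
    have ha' : D.a (u (q + 1)) (u q) ≤ -1 := by
      have := heb q; omega
    have hp := D.apos_pos (u q)
    nlinarith
  have hfb2 : ∀ q, D.a (u (q + 1)) (u (q + 2)) * D.apos (u (q + 2)) ≤ -D.apos (u (q + 2)) := by
    intro q
    have ha := D.offdiag_nonpos (u (q + 1)) (u (q + 2)) (Ne.symm (hne1 (q + 1)))
    have ha' : D.a (u (q + 1)) (u (q + 2)) ≤ -1 := by
      have h := he (q + 1)
      rw [show q + 1 + 1 = q + 2 by omega] at h
      have := D.offdiag_nonpos (u (q + 1)) (u (q + 2)) (Ne.symm (hne1 (q + 1)))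
      omega
    have hp := D.apos_pos (u (q + 2))
    nlinarith
  set E : ℕ → ℤ := fun q => 2 * D.apos (u (q + 1)) - D.apos (u q) - D.apos (u (q + 2)) with hE
  have hEnn : ∀ q, 0 ≤ E q := by
    intro q
    obtain ⟨rest, hrest, heq⟩ := key q
    have b1 := hfb1 q
    have b2 := hfb2 q
    simp only [hE]
    omega
  set G : ℕ → ℤ := fun q => D.apos (u (q + 1)) - D.apos (u q) with hG
  have hEG : ∀ q, E q = G q - G (q + 1) := by
    intro q; simp only [hE, hG]; ring_nf
  have hsum : ∑ q ∈ Finset.range m, E q = 0 := by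
    have h1 : ∑ q ∈ Finset.range m, E q = ∑ q ∈ Finset.range m, (G q - G (q + 1)) :=
      Finset.sum_congr rfl fun q _ => hEG q
    rw [h1, Finset.sum_range_sub' G m]
    have hu0 : u (0 + m) = u 0 := hper 0
    have hu1 : u (1 + m) = u 1 := hper 1
    simp only [Nat.zero_add] at hu0
    have hGm : G m = G 0 := by
      simp only [hG]
      rw [show m + 1 = 1 + m by ring, hu1, hu0]
    rw [hGm]; ring
  have hE0 : ∀ q, E q = 0 := by
    have h0 : ∀ q ∈ Finset.range m, E q = 0 :=
      (Finset.sum_eq_zero_iff_of_nonneg (fun q _ => hEnn q)).mp hsum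
    intro q
    have e1 : u q = u (q % m + 0) := by
      have := ured q 0; simpa using this
    have e2 : u (q + 1) = u (q % m + 1) := ured q 1
    have e3 : u (q + 2) = u (q % m + 2) := ured q 2
    have : E q = E (q % m) := by
      simp only [hE]
      rw [e2, e3]
      have e1' : u q = u (q % m) := by simpa using e1
      rw [e1']
    rw [this]
    exact h0 _ (Finset.mem_range.mpr (Nat.mod_lt _ hm0))
  have tight : ∀ q, D.a (u (q + 1)) (u q) * D.apos (u q) = -D.apos (u q) ∧
      D.a (u (q + 1)) (u (q + 2)) * D.apos (u (q + 2)) = -D.apos (u (q + 2)) := by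
    intro q
    obtain ⟨rest, hrest, heq⟩ := key q
    have b1 := hfb1 q
    have b2 := hfb2 q
    have e0 := hE0 q
    simp only [hE] at e0
    constructor <;> omega
  have c1 : ∀ q, D.a (u (q + 1)) (u q) = -1 := by
    intro q
    have h := (tight q).1
    have hp := D.apos_pos (u q)
    have : D.a (u (q + 1)) (u q) * D.apos (u q) = (-1) * D.apos (u q) := by omega
    exact mul_right_cancel₀ (by omega) this
  have c2 : ∀ q, D.a (u (q + 1)) (u (q + 2)) = -1 := by
    intro q
    have h := (tight q).2
    have hp := D.apos_pos (u (q + 2))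
    have : D.a (u (q + 1)) (u (q + 2)) * D.apos (u (q + 2)) = (-1) * D.apos (u (q + 2)) := by
      omega
    exact mul_right_cancel₀ (by omega) this
  refine ⟨c1, c2, ?_⟩
  -- constancy of marks
  have hGstep : ∀ q, G (q + 1) = G q := by
    intro q
    have := hE0 q
    have := hEG q
    omega
  have hGconst : ∀ q, G q = G 0 := by
    intro q
    induction q with
    | zero => rfl
    | succ q ih => rw [hGstep q, ih]
  have hGsum : ∑ q ∈ Finset.range m, G q = 0 := by
    have h1 : ∑ q ∈ Finset.range m, G q
        = ∑ q ∈ Finset.range m, (D.apos (u (q + 1)) - D.apos (u q)) := rfl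
    rw [h1, Finset.sum_range_sub (fun q => D.apos (u q)) m]
    have hu0 : u (0 + m) = u 0 := hper 0
    simp only [Nat.zero_add] at hu0
    rw [hu0]; ring
  have hG0 : G 0 = 0 := by
    have h1 : ∑ q ∈ Finset.range m, G q = m * G 0 := by
      rw [Finset.sum_congr rfl fun q _ => hGconst q]
      simp [mul_comm]
    rw [h1] at hGsum
    have : (m : ℤ) ≠ 0 := by exact_mod_cast Nat.pos_iff_ne_zero.mp hm0
    exact (mul_eq_zero.mp hGsum).resolve_left this
  intro q
  have := hGconst q
  rw [hG0] at this
  simp only [hG] at this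
  omega

/-- The affine datum is symmetrizable: `a_i^∨ a_{ij} a_j` is a symmetric matrix. -/
theorem sym : ∀ i j, D.avee i * D.a i j * D.apos j = D.avee j * D.a j i * D.apos i := by
  classical
  by_contra hc
  push_neg at hc
  obtain ⟨i0, j0, hne0⟩ := hc
  set K : I → I → ℤ :=
    fun i j => D.avee i * D.a i j * D.apos j - D.avee j * D.a j i * D.apos i with hK
  have Kanti : ∀ i j, K j i = -K i j := by intro i j; simp only [hK]; ring
  have Kdiag : ∀ i, K i i = 0 := by intro i; simp only [hK]; ring
  have Krow : ∀ i, ∑ j, K i j = 0 := by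
    intro i
    have h1 : ∑ j, D.avee i * D.a i j * D.apos j = 0 := by
      have h := D.row_zero i
      have : ∑ j, D.avee i * D.a i j * D.apos j
          = D.avee i * ∑ j, D.a i j * D.apos j := by
        rw [Finset.mul_sum]; exact Finset.sum_congr rfl fun j _ => by ring
      rw [this, h, mul_zero]
    have h2 : ∑ j, D.avee j * D.a j i * D.apos i = 0 := by
      rw [← Finset.sum_mul, D.col_zero i, zero_mul]
    simp only [hK]
    rw [Finset.sum_sub_distrib, h1, h2, sub_zero]
  have Kedge : ∀ i j, K i j ≠ 0 → D.a i j ≠ 0 := by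
    intro i j hKne hij0
    have hji0 : D.a j i = 0 := (D.zero_iff i j).mp hij0
    exact hKne (by simp [hK, hij0, hji0])
  have next : ∀ i j, 0 < K i j → ∃ l, 0 < K j l := by
    intro i j h
    by_contra hno
    push_neg at hno
    have hall : ∀ l ∈ Finset.univ, K j l = 0 := by
      rw [← Finset.sum_eq_zero_iff_of_nonpos (fun l _ => hno l)]
      exact Krow j
    have hji := hall i (Finset.mem_univ i)
    rw [Kanti] at hji
    omega
  have hstart : ∃ p : I × I, 0 < K p.1 p.2 := by
    have hne : K i0 j0 ≠ 0 := sub_ne_zero.mpr hne0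
    rcases lt_or_gt_of_ne hne with h | h
    · refine ⟨(j0, i0), ?_⟩
      show 0 < K j0 i0
      rw [Kanti]; omega
    · exact ⟨(i0, j0), h⟩
  obtain ⟨p0, hp0⟩ := hstart
  let S := {p : I × I // 0 < K p.1 p.2}
  let step : S → S := fun p =>
    ⟨(p.1.2, Classical.choose (next p.1.1 p.1.2 p.2)),
      Classical.choose_spec (next p.1.1 p.1.2 p.2)⟩
  let f : ℕ → S := fun n => step^[n] ⟨p0, hp0⟩
  have hsucc : ∀ n, f (n + 1) = step (f n) := by
    intro n
    show step^[n + 1] _ = _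
    rw [Function.iterate_succ_apply']
  have hfst : ∀ n, (f (n + 1)).1.1 = (f n).1.2 := by
    intro n; rw [hsucc]
  set U' : ℕ → I := fun n => (f n).1.1 with hU'
  have hKpos : ∀ n, 0 < K (U' n) (U' (n + 1)) := by
    intro n
    have := (f n).2
    simp only [hU']
    rw [hfst n]
    exact this
  obtain ⟨x, y, hxy, hfeq⟩ := Finite.exists_ne_map_eq_of_infinite f
  wlog hlt : x < y generalizing x y
  · exact this y x (Ne.symm hxy) hfeq.symm (by omega)
  set d : ℕ := y - x with hd
  have hd0 : 0 < d := by omega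
  have hfxd : f (x + d) = f x := by
    rw [show x + d = y by omega]; exact hfeq.symm
  have hfshift : ∀ j, f (x + d + j) = f (x + j) := by
    intro j
    have e1 : f (x + d + j) = step^[j] (f (x + d)) := by
      show step^[x + d + j] _ = _
      rw [show x + d + j = j + (x + d) by ring, Function.iterate_add_apply]
    have e2 : f (x + j) = step^[j] (f x) := by
      show step^[x + j] _ = _
      rw [show x + j = j + x by ring, Function.iterate_add_apply]
    rw [e1, e2, hfxd]
  set U : ℕ → I := fun j => U' (x + j) with hU
  have hUper : ∀ j, U (j + d) = U j := by
    intro j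
    show U' (x + (j + d)) = U' (x + j)
    rw [show x + (j + d) = x + d + j by ring]
    show (f (x + d + j)).1.1 = (f (x + j)).1.1
    rw [hfshift j]
  have hUK : ∀ j, 0 < K (U j) (U (j + 1)) := by
    intro j
    have := hKpos (x + j)
    simpa [hU, show x + j + 1 = x + (j + 1) by ring] using this
  have hex : ∃ L, 0 < L ∧ ∃ s, s + L ≤ d ∧ U s = U (s + L) :=
    ⟨d, hd0, 0, by omega, (hUper 0).symm⟩
  set L := Nat.find hex with hLdef
  obtain ⟨hL0, s, hsd, hUs⟩ := Nat.find_spec hex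
  rw [← hLdef] at hL0 hsd hUs
  have hwinj : ∀ b < L, ∀ b' < L, U (s + b) = U (s + b') → b = b' := by
    intro b hb b' hb' heq
    by_contra hbb
    rcases Nat.lt_or_ge b b' with h | h
    · exact Nat.find_min hex (show b' - b < L by omega)
        ⟨by omega, s + b, by omega, by rw [show s + b + (b' - b) = s + b' by omega]; exact heq⟩
    · have h' : b' < b := by omega
      exact Nat.find_min hex (show b - b' < L by omega)
        ⟨by omega, s + b', by omega, by rw [show s + b' + (b - b') = s + b by omega]; exact heq.symm⟩
  have hL3 : 3 ≤ L := by
    have hL1 : L ≠ 1 := by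
      intro h
      have hUs1 : U s = U (s + 1) := by rw [← h]; exact hUs
      have hthis := hUK s
      rw [← hUs1] at hthis
      rw [Kdiag (U s)] at hthis
      omega
    have hL2 : L ≠ 2 := by
      intro h
      have hUs2 : U s = U (s + 2) := by rw [← h]; exact hUs
      have k2 := hUK (s + 1)
      rw [show s + 1 + 1 = s + 2 by omega] at k2
      rw [← hUs2] at k2
      have k1 := hUK s
      rw [Kanti] at k2
      omega
    omega
  set v : ℕ → I := fun q => U (s + q % L) with hv
  have hvper : ∀ q, v (q + L) = v q := by
    intro q; simp only [hv, Nat.add_mod_right]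
  have hvinj : ∀ q < L, ∀ q' < L, v q = v q' → q = q' := by
    intro q hq q' hq' h
    simp only [hv, Nat.mod_eq_of_lt hq, Nat.mod_eq_of_lt hq'] at h
    exact hwinj q hq q' hq' h
  have hvsucc : ∀ q, v (q + 1) = U (s + q % L + 1) := by
    intro q
    have h1L : 1 % L = 1 := Nat.mod_eq_of_lt (by omega)
    have hmod : (q + 1) % L = (q % L + 1) % L := by
      conv_lhs => rw [Nat.add_mod, h1L]
    by_cases hc : q % L + 1 < L
    · simp only [hv, hmod, Nat.mod_eq_of_lt hc]
      rw [← Nat.add_assoc]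
    · have hqL : q % L + 1 = L := by
        have := Nat.mod_lt q (show 0 < L by omega)
        omega
      simp only [hv, hmod, hqL, Nat.mod_self, Nat.add_zero]
      rw [hUs]
      congr 1
      omega
  have hvedge : ∀ q, D.a (v q) (v (q + 1)) ≠ 0 := by
    intro q
    rw [hvsucc q]
    have := hUK (s + q % L)
    exact Kedge _ _ (ne_of_gt this)
  obtain ⟨c1, c2, c3⟩ := D.cycle_tight hL3 v hvper hvinj hvedge
  have hvedge' : ∀ q, D.transpose.a (v q) (v (q + 1)) ≠ 0 := by
    intro q
    show D.a (v (q + 1)) (v q) ≠ 0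
    rw [c1 q]; omega
  obtain ⟨c1', c2', c3'⟩ := D.transpose.cycle_tight hL3 v hvper hvinj hvedge'
  have hKv : 0 < K (v 0) (v 1) := by
    have hv0 : v 0 = U s := by simp [hv]
    have hv1 : v 1 = U (s + 1) := by
      simp only [hv, Nat.mod_eq_of_lt (show 1 < L by omega)]
    rw [hv0, hv1]
    exact hUK s
  have ha01 : D.a (v 0) (v 1) = -1 := by
    have := c2 (L - 1)
    rw [show L - 1 + 1 = L by omega, show L - 1 + 2 = L + 1 by omega] at this
    have e0 : v L = v 0 := by have := hvper 0; simpa using this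
    have e1 : v (L + 1) = v 1 := by have := hvper 1; simpa [Nat.add_comm] using this
    rw [e0, e1] at this
    exact this
  have ha10 : D.a (v 1) (v 0) = -1 := c1 0
  have hap : D.apos (v 1) = D.apos (v 0) := c3 0
  have hav : D.avee (v 1) = D.avee (v 0) := c3' 0
  have : K (v 0) (v 1) = 0 := by
    simp only [hK]
    rw [ha01, ha10, hap, hav]
    ring
  omega

end AffineData


namespace AffineData

variable (D : AffineData I)

lemma Mrow (i : I) : ∑ j, D.avee i * D.a i j * D.apos j = 0 := by
  have h := D.row_zero i
  have e : ∑ j, D.avee i * D.a i j * D.apos j = D.avee i * ∑ j, D.a i j * D.apos j := by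
    rw [Finset.mul_sum]; exact Finset.sum_congr rfl fun j _ => by ring
  rw [e, h, mul_zero]

lemma Mcol (j : I) : ∑ i, D.avee i * D.a i j * D.apos j = 0 := by
  rw [← Finset.sum_mul, D.col_zero j, zero_mul]

/-- The rational symmetrizer `d_i = a_i^∨ / a_i`. -/
noncomputable def dq (i : I) : ℚ := (D.avee i : ℚ) / (D.apos i : ℚ)

lemma aposq_pos (i : I) : (0 : ℚ) < (D.apos i : ℚ) := by exact_mod_cast D.apos_pos i

lemma aposq_ne (i : I) : (D.apos i : ℚ) ≠ 0 := ne_of_gt (D.aposq_pos i)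

lemma dq_mul_apos (i : I) : D.dq i * (D.apos i : ℚ) = (D.avee i : ℚ) :=
  div_mul_cancel₀ _ (D.aposq_ne i)

lemma dq_pos (i : I) : 0 < D.dq i := by
  have h1 : (0 : ℚ) < (D.avee i : ℚ) := by exact_mod_cast D.avee_pos i
  exact div_pos h1 (D.aposq_pos i)

lemma symq (i j : I) : D.dq i * (D.a i j : ℚ) = D.dq j * (D.a j i : ℚ) := by
  have hs := D.sym i j
  have hsq : (D.avee i : ℚ) * (D.a i j : ℚ) * (D.apos j : ℚ)
      = (D.avee j : ℚ) * (D.a j i : ℚ) * (D.apos i : ℚ) := by exact_mod_cast hs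
  rw [dq, dq, div_mul_eq_mul_div, div_mul_eq_mul_div,
    div_eq_div_iff (D.aposq_ne i) (D.aposq_ne j)]
  linarith [hsq]

lemma coroot_castq (i : I) (mu : P I) :
    (D.coroot i mu : ℚ) = (mu.1 i : ℚ) + ∑ j, (D.a i j : ℚ) * (mu.2 j : ℚ) := by
  rw [coroot]
  push_cast
  ring

/-- The `W`-invariant "quadratic" function on `P`. -/
noncomputable def Vq (mu : P I) : ℚ :=
  ∑ i, D.dq i * ((mu.1 i : ℚ) + (D.coroot i mu : ℚ)) * (mu.2 i : ℚ)

lemma swapQ (x y : I → ℚ) :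
    ∑ i, D.dq i * (∑ j, (D.a i j : ℚ) * x j) * y i
      = ∑ i, D.dq i * (∑ j, (D.a i j : ℚ) * y j) * x i := by
  have expand : ∀ (x y : I → ℚ),
      ∑ i, D.dq i * (∑ j, (D.a i j : ℚ) * x j) * y i
        = ∑ i, ∑ j, (D.dq i * (D.a i j : ℚ)) * (x j * y i) := by
    intro x y
    refine Finset.sum_congr rfl fun i _ => ?_
    rw [Finset.mul_sum, Finset.sum_mul]
    exact Finset.sum_congr rfl fun j _ => by ring
  rw [expand, expand]
  rw [Finset.sum_comm]
  refine Finset.sum_congr rfl fun j _ => Finset.sum_congr rfl fun i _ => ?_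
  have h := D.symq i j
  linear_combination (x j * y i) * h

lemma Vq_refl (j : I) (mu : P I) : D.Vq (D.refl j mu) = D.Vq mu := by
  classical
  set T : ℚ := (D.coroot j mu : ℚ) with hT
  have hVexp : D.Vq (D.refl j mu)
      = ∑ i, D.dq i * ((mu.1 i : ℚ) + ((D.coroot i mu : ℚ) - T * (D.a i j : ℚ)))
          * ((mu.2 i : ℚ) - T * (if i = j then 1 else 0)) := by
    rw [Vq]
    refine Finset.sum_congr rfl fun i _ => ?_
    rw [D.refl_fst, D.coroot_refl, D.refl_snd]
    have hsingle : ((Pi.single j 1 : I → ℤ) i : ℚ) = (if i = j then 1 else 0) := by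
      rw [Pi.single_apply]
      split <;> simp
    push_cast [hsingle]
    ring
  rw [hVexp]
  have hsplit : ∀ i : I,
      D.dq i * ((mu.1 i : ℚ) + ((D.coroot i mu : ℚ) - T * (D.a i j : ℚ)))
          * ((mu.2 i : ℚ) - T * (if i = j then 1 else 0))
      = D.dq i * ((mu.1 i : ℚ) + (D.coroot i mu : ℚ)) * (mu.2 i : ℚ)
        - T * (D.dq i * (D.a i j : ℚ) * (mu.2 i : ℚ))
        - (if i = j then
            T * (D.dq i * ((mu.1 i : ℚ) + (D.coroot i mu : ℚ) - T * (D.a i j : ℚ)))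
          else 0) := by
    intro i
    by_cases h : i = j <;> simp only [h, if_true, if_false] <;> ring
  rw [Finset.sum_congr rfl fun i _ => hsplit i]
  rw [Finset.sum_sub_distrib, Finset.sum_sub_distrib]
  have e1 : ∑ i, T * (D.dq i * (D.a i j : ℚ) * (mu.2 i : ℚ))
      = T * (D.dq j * ((D.coroot j mu : ℚ) - (mu.1 j : ℚ))) := by
    rw [← Finset.mul_sum]
    congr 1
    have e11 : ∑ i, D.dq i * (D.a i j : ℚ) * (mu.2 i : ℚ)
        = ∑ i, D.dq j * ((D.a j i : ℚ) * (mu.2 i : ℚ)) := by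
      refine Finset.sum_congr rfl fun i _ => ?_
      have h := D.symq i j
      linear_combination (mu.2 i : ℚ) * h
    rw [e11, ← Finset.mul_sum]
    congr 1
    have := D.coroot_castq j mu
    linarith [this]
  have e2 : (∑ i, if i = j then
        T * (D.dq i * ((mu.1 i : ℚ) + (D.coroot i mu : ℚ) - T * (D.a i j : ℚ)))
      else 0)
      = T * (D.dq j * ((mu.1 j : ℚ) + (D.coroot j mu : ℚ) - T * 2)) := by
    rw [Finset.sum_ite_eq' Finset.univ j]
    simp only [Finset.mem_univ, if_true]
    have : (D.a j j : ℚ) = 2 := by exact_mod_cast D.diag j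
    rw [this]
  rw [e1, e2]
  show D.Vq mu - _ - _ = D.Vq mu
  rw [hT]
  ring

lemma Vq_weyl : ∀ w ∈ D.weyl, ∀ mu, D.Vq (w mu) = D.Vq mu :=
  D.weyl_invariant D.Vq D.Vq_refl

/-- The PSD rewriting of the symmetrized quadratic form. -/
lemma psdQ (r : I → ℚ) :
    ∑ i, (D.avee i : ℚ) * (∑ j, (D.a i j : ℚ) * ((D.apos j : ℚ) * r j)) * r i
    = (1/2) * ∑ i, ∑ j,
        (-((D.avee i : ℚ) * (D.a i j : ℚ) * (D.apos j : ℚ))) * (r i - r j)^2 := by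
  classical
  set N : I → I → ℚ := fun i j => (D.avee i : ℚ) * (D.a i j : ℚ) * (D.apos j : ℚ) with hN
  have rowN : ∀ i, ∑ j, N i j = 0 := by
    intro i
    have h := D.Mrow i
    have : ((∑ j, D.avee i * D.a i j * D.apos j : ℤ) : ℚ) = 0 := by rw [h]; norm_num
    push_cast at this
    exact this
  have colN : ∀ j, ∑ i, N i j = 0 := by
    intro j
    have h := D.Mcol j
    have : ((∑ i, D.avee i * D.a i j * D.apos j : ℤ) : ℚ) = 0 := by rw [h]; norm_num
    push_cast at this
    exact this
  have lhs_eq : ∑ i, (D.avee i : ℚ) * (∑ j, (D.a i j : ℚ) * ((D.apos j : ℚ) * r j)) * r i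
      = ∑ i, ∑ j, N i j * (r i * r j) := by
    refine Finset.sum_congr rfl fun i _ => ?_
    rw [Finset.mul_sum, Finset.sum_mul]
    exact Finset.sum_congr rfl fun j _ => by simp only [hN]; ring
  rw [lhs_eq]
  have key : ∑ i, ∑ j, ((-(N i j)) * (r i - r j)^2 - 2 * (N i j * (r i * r j)))
      = ∑ i, ∑ j, ((-(N i j)) * (r i)^2 + (-(N i j)) * (r j)^2) :=
    Finset.sum_congr rfl fun i _ => Finset.sum_congr rfl fun j _ => by ring
  have split1 : ∑ i, ∑ j, ((-(N i j)) * (r i)^2 + (-(N i j)) * (r j)^2)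
      = (∑ i, ∑ j, (-(N i j)) * (r i)^2) + (∑ i, ∑ j, (-(N i j)) * (r j)^2) := by
    rw [← Finset.sum_add_distrib]
    exact Finset.sum_congr rfl fun i _ => Finset.sum_add_distrib
  have split2 : ∑ i, ∑ j, ((-(N i j)) * (r i - r j)^2 - 2 * (N i j * (r i * r j)))
      = (∑ i, ∑ j, (-(N i j)) * (r i - r j)^2)
        - 2 * (∑ i, ∑ j, N i j * (r i * r j)) := by
    rw [Finset.mul_sum, ← Finset.sum_sub_distrib]
    refine Finset.sum_congr rfl fun i _ => ?_
    rw [Finset.mul_sum, ← Finset.sum_sub_distrib]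
  have s1 : (∑ i, ∑ j, (-(N i j)) * (r i)^2) = 0 := by
    refine Finset.sum_eq_zero fun i _ => ?_
    have : ∑ j, (-(N i j)) * (r i)^2 = (-(∑ j, N i j)) * (r i)^2 := by
      rw [← Finset.sum_mul, ← Finset.sum_neg_distrib]
    rw [this, rowN, neg_zero, zero_mul]
  have s3 : (∑ i, ∑ j, (-(N i j)) * (r j)^2) = 0 := by
    rw [Finset.sum_comm]
    refine Finset.sum_eq_zero fun j _ => ?_
    have : ∑ i, (-(N i j)) * (r j)^2 = (-(∑ i, N i j)) * (r j)^2 := by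
      rw [← Finset.sum_mul, ← Finset.sum_neg_distrib]
    rw [this, colN, neg_zero, zero_mul]
  have hzero : (∑ i, ∑ j, (-(N i j)) * (r i - r j)^2)
      - 2 * (∑ i, ∑ j, N i j * (r i * r j)) = 0 := by
    rw [← split2, key, split1, s1, s3]; ring
  have hconv : ∑ i, ∑ j, (-((D.avee i : ℚ) * (D.a i j : ℚ) * (D.apos j : ℚ))) * (r i - r j)^2
      = ∑ i, ∑ j, (-(N i j)) * (r i - r j)^2 := rfl
  rw [hconv]
  linarith [hzero]

end AffineData


namespace AffineData

variable (D : AffineData I)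

/-- In a connected diagram, a function with a given spread has a large gap across some edge. -/
lemma gap (r : I → ℚ) {i0 : I} (h0 : r i0 = 0)
    {R : ℚ} (hmax : ∀ i, r i ≤ R) {i1 : I} (h1 : r i1 = R) (hR : 0 < R) :
    ∃ i j, i ≠ j ∧ D.a i j ≠ 0 ∧ R / (Fintype.card I : ℚ) ≤ |r i - r j| := by
  classical
  by_contra hc
  push_neg at hc
  set n := Fintype.card I with hn'
  have hn : 0 < n := Fintype.card_pos_iff.mpr ⟨i0⟩
  have hnq : (0 : ℚ) < (n : ℚ) := by exact_mod_cast hn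
  set ε : ℚ := R / n with hε'
  have hε : 0 < ε := div_pos hR hnq
  set S : ℕ → Finset I := fun p => Finset.univ.filter (fun i => r i < p * ε) with hS
  have hmono : ∀ p, S p ⊆ S (p + 1) := by
    intro p i hi
    simp only [hS, Finset.mem_filter, Finset.mem_univ, true_and] at hi ⊢
    have : (p : ℚ) * ε ≤ ((p : ℚ) + 1) * ε := by nlinarith
    push_cast
    linarith
  have hi0mem : ∀ p : ℕ, i0 ∈ S (p + 1) := by
    intro p
    simp only [hS, Finset.mem_filter, Finset.mem_univ, true_and, h0]
    have : (0 : ℚ) < ((p : ℚ) + 1) * ε := by positivity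
    push_cast
    linarith
  have hstep : ∀ p : ℕ, (p + 1 ≤ (S (p + 1)).card) ∨ S (p + 1) = Finset.univ := by
    intro p
    induction p with
    | zero =>
        left
        have : (S 1).Nonempty := ⟨i0, by simpa using hi0mem 0⟩
        simpa using Finset.card_pos.mpr this
    | succ p ih =>
        show (p + 1 + 1 ≤ (S (p + 2)).card) ∨ S (p + 2) = Finset.univ
        rcases ih with hcard | huniv
        · by_cases hu : S (p + 2) = Finset.univ
          · exact Or.inr hu
          · left
            have hne_univ : S (p + 1) ≠ Finset.univ := by
              intro h
              exact hu (Finset.univ_subset_iff.mp (h ▸ hmono (p + 1)))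
            have hcompl : ∃ j', j' ∉ S (p + 1) := by
              by_contra hall
              push_neg at hall
              exact hne_univ (Finset.eq_univ_iff_forall.mpr hall)
            obtain ⟨j', hj'⟩ := hcompl
            obtain ⟨i, hi, j, hj, ha⟩ :=
              D.connected (↑(S (p + 1)) : Set I) ⟨i0, by exact_mod_cast hi0mem p⟩
                ⟨j', by simp [hj']⟩
            have hiS : i ∈ S (p + 1) := by exact_mod_cast hi
            have hjS : j ∉ S (p + 1) := by
              intro h
              exact hj (by exact_mod_cast h)
            have hij : i ≠ j := fun h => hjS (h ▸ hiS)
            have hlt := hc i j hij ha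
            have hri : r i < ((p : ℚ) + 1) * ε := by
              have := (Finset.mem_filter.mp hiS).2
              push_cast at this ⊢
              linarith
            have hrj : ((p : ℚ) + 1) * ε ≤ r j := by
              by_contra hcon
              push_neg at hcon
              apply hjS
              simp only [hS, Finset.mem_filter, Finset.mem_univ, true_and]
              push_cast
              linarith
            have habs : r j - r i ≤ |r i - r j| := by
              rw [abs_sub_comm]
              exact le_abs_self _
            have hrj2 : r j < ((p : ℚ) + 2) * ε := by
              rw [hε'] at hlt ⊢
              rw [hn'] at hlt ⊢
              linarith
            have hjnew : j ∈ S (p + 2) := by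
              simp only [hS, Finset.mem_filter, Finset.mem_univ, true_and]
              push_cast
              linarith
            have hsubset : insert j (S (p + 1)) ⊆ S (p + 2) :=
              Finset.insert_subset hjnew (hmono (p + 1))
            have hcard2 : (S (p + 1)).card + 1 ≤ (S (p + 2)).card := by
              have := Finset.card_le_card hsubset
              rw [Finset.card_insert_of_notMem hjS] at this
              omega
            omega
        · exact Or.inr (Finset.univ_subset_iff.mp (huniv ▸ hmono (p + 1)))
  have hfin : S n = Finset.univ := by
    have := hstep (n - 1)
    rw [show n - 1 + 1 = n by omega] at this
    rcases this with h | h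
    · exact Finset.eq_univ_of_card _ (le_antisymm (Finset.card_le_univ _) h)
    · exact h
  have hi1 : i1 ∈ S n := hfin ▸ Finset.mem_univ i1
  have : r i1 < (n : ℚ) * ε := (Finset.mem_filter.mp hi1).2
  rw [h1, hε'] at this
  rw [mul_div_cancel₀ _ (ne_of_gt hnq)] at this
  exact lt_irrefl _ this

end AffineData


namespace AffineData

variable (D : AffineData I)

lemma rowq (i : I) : ∑ j, (D.a i j : ℚ) * (D.apos j : ℚ) = 0 := by
  have h := D.row_zero i
  have : ((∑ j, D.a i j * D.apos j : ℤ) : ℚ) = 0 := by rw [h]; norm_num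
  push_cast at this
  exact this

lemma cpair_castq (nu : P I) :
    (D.cpair nu : ℚ) = ∑ i, (D.avee i : ℚ) * (D.coroot i nu : ℚ) := by
  rw [cpair]; push_cast; ring

set_option maxHeartbeats 1000000 in
/-- Boundedness of the positive part of a Weyl orbit of positive level. -/
lemma key_bound (lam : P I) (hk : 0 < D.cpair lam) :
    ∃ B : ℚ, ∀ w : AddAut (P I), w ∈ D.weyl → (∀ i, lam.2 i ≤ (w lam).2 i) →
      ((∑ i, ((w lam).2 i - lam.2 i) : ℤ) : ℚ) ≤ B := by
  classical
  rcases isEmpty_or_nonempty I with hI | hI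
  · exfalso
    have : D.cpair lam = 0 := by simp [cpair]
    omega
  set n := Fintype.card I with hn'
  have hn : 0 < n := Fintype.card_pos_iff.mpr hI
  have hnq : (0 : ℚ) < (n : ℚ) := by exact_mod_cast hn
  set H : ℤ := ∑ i, D.avee i * |D.coroot i lam| with hH'
  have hH0 : 0 ≤ H :=
    Finset.sum_nonneg fun i _ => mul_nonneg (le_of_lt (D.avee_pos i)) (abs_nonneg _)
  set Hq : ℚ := (H : ℚ) + 1 with hHq'
  have hHqpos : 0 < Hq := by
    have : (0 : ℚ) ≤ (H : ℚ) := by exact_mod_cast hH0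
    rw [hHq']; linarith
  set R0 : ℚ := 2 * Hq * (n : ℚ) ^ 2 with hR0'
  have hR0pos : 0 < R0 := by rw [hR0']; positivity
  set Sa : ℚ := ∑ i, (D.apos i : ℚ) with hSa'
  have hSa0 : 0 ≤ Sa := Finset.sum_nonneg fun i _ => le_of_lt (D.aposq_pos i)
  refine ⟨Sa * (Hq * R0 + R0), ?_⟩
  intro w hw hzpos
  set mu := w lam with hmu
  have hfst : mu.1 = lam.1 := D.fst_weyl w hw lam
  have hVq : D.Vq mu = D.Vq lam := D.Vq_weyl w hw lam
  have hcp : D.cpair mu = D.cpair lam := D.cpair_weyl w hw lam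
  set z : I → ℤ := fun i => mu.2 i - lam.2 i with hz'
  have hz0 : ∀ i, 0 ≤ z i := fun i => sub_nonneg.mpr (hzpos i)
  -- the master identity
  have S0 : ∑ i, D.dq i * ((D.coroot i mu : ℚ) + (D.coroot i lam : ℚ)) * ((z i : ℚ)) = 0 := by
    have hpt : ∀ i, D.dq i * ((D.coroot i mu : ℚ) + (D.coroot i lam : ℚ)) * ((z i : ℚ))
        = (D.dq i * ((lam.1 i : ℚ) + (D.coroot i mu : ℚ)) * (mu.2 i : ℚ)
            - D.dq i * ((lam.1 i : ℚ) + (D.coroot i lam : ℚ)) * (lam.2 i : ℚ))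
          + (D.dq i * (∑ j, (D.a i j : ℚ) * (lam.2 j : ℚ)) * (mu.2 i : ℚ)
            - D.dq i * (∑ j, (D.a i j : ℚ) * (mu.2 j : ℚ)) * (lam.2 i : ℚ)) := by
      intro i
      have ht : (D.coroot i mu : ℚ)
          = (lam.1 i : ℚ) + ∑ j, (D.a i j : ℚ) * (mu.2 j : ℚ) := by
        rw [D.coroot_castq i mu, hfst]
      have ht0 : (D.coroot i lam : ℚ)
          = (lam.1 i : ℚ) + ∑ j, (D.a i j : ℚ) * (lam.2 j : ℚ) :=
        D.coroot_castq i lam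
      have hzc : ((z i : ℚ)) = (mu.2 i : ℚ) - (lam.2 i : ℚ) := by
        rw [hz']; push_cast; ring
      rw [hzc, ht, ht0]
      ring
    rw [Finset.sum_congr rfl fun i _ => hpt i]
    rw [Finset.sum_add_distrib, Finset.sum_sub_distrib, Finset.sum_sub_distrib]
    have hv1 : ∑ i, D.dq i * ((lam.1 i : ℚ) + (D.coroot i mu : ℚ)) * (mu.2 i : ℚ)
        = D.Vq mu := by
      rw [Vq]
      exact Finset.sum_congr rfl fun i _ => by rw [hfst]
    have hv2 : ∑ i, D.dq i * ((lam.1 i : ℚ) + (D.coroot i lam : ℚ)) * (lam.2 i : ℚ)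
        = D.Vq lam := by rw [Vq]
    have hswap := D.swapQ (fun j => (lam.2 j : ℚ)) (fun j => (mu.2 j : ℚ))
    rw [hv1, hv2, hVq]
    linarith [hswap]
  -- normalize
  set ρ : I → ℚ := fun i => (z i : ℚ) / (D.apos i : ℚ) with hρ'
  obtain ⟨imin, -, hmin⟩ := Finset.exists_min_image Finset.univ ρ Finset.univ_nonempty
  obtain ⟨imax, -, hmax⟩ := Finset.exists_max_image Finset.univ ρ Finset.univ_nonempty
  set m : ℚ := ρ imin with hm'
  set r : I → ℚ := fun i => ρ i - m with hr'
  have hr0 : ∀ i, 0 ≤ r i := fun i => sub_nonneg.mpr (hmin i (Finset.mem_univ i))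
  set R : ℚ := r imax with hR'
  have hrR : ∀ i, r i ≤ R := fun i => sub_le_sub_right (hmax i (Finset.mem_univ i)) m
  have hRge : 0 ≤ R := hr0 imax
  have hm0 : 0 ≤ m :=
    div_nonneg (by exact_mod_cast hz0 imin) (le_of_lt (D.aposq_pos imin))
  have hzeq : ∀ i, ((z i : ℚ)) = (D.apos i : ℚ) * (m + r i) := by
    intro i
    have h1 : m + r i = ρ i := by rw [hr']; ring
    rw [h1, hρ', mul_comm]
    exact (div_mul_cancel₀ _ (D.aposq_ne i)).symm
  set k : ℚ := (D.cpair lam : ℚ) with hk'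
  have hk1 : 1 ≤ k := by
    rw [hk']; exact_mod_cast hk
  clear_value n H Hq R0 Sa mu z ρ m r R k
  -- convert the master identity
  have SA : ∑ i, (D.avee i : ℚ) * ((D.coroot i mu : ℚ) + (D.coroot i lam : ℚ)) * (m + r i)
      = 0 := by
    rw [← S0]
    refine Finset.sum_congr rfl fun i _ => ?_
    rw [hzeq i]
    have h := D.dq_mul_apos i
    linear_combination (-(((D.coroot i mu : ℚ) + (D.coroot i lam : ℚ)) * (m + r i))) * h
  have SB : 2 * m * k + ∑ i, (D.avee i : ℚ)
      * ((D.coroot i mu : ℚ) + (D.coroot i lam : ℚ)) * r i = 0 := by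
    have e : m * ((∑ i, (D.avee i : ℚ) * (D.coroot i mu : ℚ))
          + (∑ i, (D.avee i : ℚ) * (D.coroot i lam : ℚ)))
        + ∑ i, (D.avee i : ℚ) * ((D.coroot i mu : ℚ) + (D.coroot i lam : ℚ)) * r i
        = ∑ i, (D.avee i : ℚ) * ((D.coroot i mu : ℚ) + (D.coroot i lam : ℚ)) * (m + r i) := by
      rw [mul_add, Finset.mul_sum, Finset.mul_sum, ← Finset.sum_add_distrib,
        ← Finset.sum_add_distrib]
      exact Finset.sum_congr rfl fun i _ => by ring
    have hc1 : ∑ i, (D.avee i : ℚ) * (D.coroot i mu : ℚ) = k := by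
      rw [← D.cpair_castq mu, hcp, hk']
    have hc2 : ∑ i, (D.avee i : ℚ) * (D.coroot i lam : ℚ) = k := by
      rw [← D.cpair_castq lam, hk']
    rw [hc1, hc2] at e
    rw [SA] at e
    linarith [e]
  have hdiffq : ∀ i, (D.coroot i mu : ℚ) - (D.coroot i lam : ℚ)
      = ∑ j, (D.a i j : ℚ) * ((D.apos j : ℚ) * r j) := by
    intro i
    rw [D.coroot_castq i mu, D.coroot_castq i lam, hfst]
    have e2 : (∑ j, (D.a i j : ℚ) * (mu.2 j : ℚ)) - ∑ j, (D.a i j : ℚ) * (lam.2 j : ℚ)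
        = m * (∑ j, (D.a i j : ℚ) * (D.apos j : ℚ))
          + ∑ j, (D.a i j : ℚ) * ((D.apos j : ℚ) * r j) := by
      rw [← Finset.sum_sub_distrib, Finset.mul_sum, ← Finset.sum_add_distrib]
      refine Finset.sum_congr rfl fun jj _ => ?_
      have hzc : (mu.2 jj : ℚ) - (lam.2 jj : ℚ) = (D.apos jj : ℚ) * (m + r jj) := by
        have h := hzeq jj
        rw [hz'] at h
        push_cast at h
        linarith [h]
      linear_combination (D.a i jj : ℚ) * hzc
    rw [D.rowq i] at e2
    linarith [e2]
  have SE : ∑ i, (D.avee i : ℚ) * ((D.coroot i mu : ℚ) - (D.coroot i lam : ℚ)) * r i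
      = ∑ i, (D.avee i : ℚ) * (∑ j, (D.a i j : ℚ) * ((D.apos j : ℚ) * r j)) * r i := by
    refine Finset.sum_congr rfl fun i _ => ?_
    rw [hdiffq i]
  have SC : ∑ i, (D.avee i : ℚ) * ((D.coroot i mu : ℚ) + (D.coroot i lam : ℚ)) * r i
      = (∑ i, (D.avee i : ℚ) * ((D.coroot i mu : ℚ) - (D.coroot i lam : ℚ)) * r i)
        + 2 * ∑ i, (D.avee i : ℚ) * (D.coroot i lam : ℚ) * r i := by
    rw [Finset.mul_sum, ← Finset.sum_add_distrib]
    exact Finset.sum_congr rfl fun i _ => by ring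
  have hpsd := D.psdQ r
  -- final master equation
  have Sfin : 2 * m * k
      + (1/2) * (∑ i, ∑ j,
          (-((D.avee i : ℚ) * (D.a i j : ℚ) * (D.apos j : ℚ))) * (r i - r j)^2)
      + 2 * (∑ i, (D.avee i : ℚ) * (D.coroot i lam : ℚ) * r i) = 0 := by
    rw [← hpsd, ← SE]
    linarith [SB, SC]
  -- bounds
  have hT0 : ∀ p q : I,
      0 ≤ (-((D.avee p : ℚ) * (D.a p q : ℚ) * (D.apos q : ℚ))) * (r p - r q)^2 := by
    intro p q
    by_cases hpq : p = q
    · subst hpq; simp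
    · have h1 : D.avee p * D.a p q * D.apos q ≤ 0 := by
        have e1 := D.offdiag_nonpos p q hpq
        have e2 := D.avee_pos p
        have e3 := D.apos_pos q
        have e5 := mul_le_mul_of_nonneg_left e1 (le_of_lt e2)
        rw [mul_zero] at e5
        have e6 := mul_le_mul_of_nonneg_right e5 (le_of_lt e3)
        rw [zero_mul] at e6
        exact e6
      have h1q : ((D.avee p : ℚ) * (D.a p q : ℚ) * (D.apos q : ℚ)) ≤ 0 := by
        exact_mod_cast h1
      exact mul_nonneg (neg_nonneg.mpr h1q) (sq_nonneg _)
  have hQr0 : 0 ≤ (1/2) * (∑ i, ∑ j,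
      (-((D.avee i : ℚ) * (D.a i j : ℚ) * (D.apos j : ℚ))) * (r i - r j)^2) := by
    have h0 : 0 ≤ ∑ i, ∑ j,
        (-((D.avee i : ℚ) * (D.a i j : ℚ) * (D.apos j : ℚ))) * (r i - r j)^2 :=
      Finset.sum_nonneg fun i _ => Finset.sum_nonneg fun j _ => hT0 i j
    linarith
  have hlowpt : ∀ i, -((D.avee i : ℚ) * ((|D.coroot i lam| : ℤ) : ℚ) * R)
      ≤ (D.avee i : ℚ) * (D.coroot i lam : ℚ) * r i := by
    intro i
    have hva : (0 : ℚ) ≤ (D.avee i : ℚ) := by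
      have := D.avee_pos i; exact_mod_cast le_of_lt this
    have ha1 : ((D.coroot i lam : ℤ) : ℚ) ≤ ((|D.coroot i lam| : ℤ) : ℚ) := by
      exact_mod_cast le_abs_self _
    have ha2 : -(((|D.coroot i lam| : ℤ) : ℚ)) ≤ ((D.coroot i lam : ℤ) : ℚ) := by
      exact_mod_cast neg_abs_le _
    have habs0 : (0 : ℚ) ≤ ((|D.coroot i lam| : ℤ) : ℚ) := by
      exact_mod_cast abs_nonneg (D.coroot i lam)
    rcases le_or_gt 0 (D.coroot i lam) with hc | hc
    · have h2 : (0 : ℚ) ≤ (D.coroot i lam : ℚ) := by exact_mod_cast hc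
      have hRHS : 0 ≤ (D.avee i : ℚ) * (D.coroot i lam : ℚ) * r i :=
        mul_nonneg (mul_nonneg hva h2) (hr0 i)
      have hLHS : -((D.avee i : ℚ) * ((|D.coroot i lam| : ℤ) : ℚ) * R) ≤ 0 :=
        neg_nonpos_of_nonneg (mul_nonneg (mul_nonneg hva habs0) hRge)
      linarith
    · have habs : ((|D.coroot i lam| : ℤ) : ℚ) = -((D.coroot i lam : ℤ) : ℚ) := by
        rw [abs_of_neg hc]; push_cast; ring
      rw [habs]
      have hc' : (D.coroot i lam : ℚ) < 0 := by exact_mod_cast hc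
      have hmul := mul_le_mul_of_nonneg_left (hrR i)
        (mul_nonneg hva (by linarith : (0:ℚ) ≤ -((D.coroot i lam : ℤ) : ℚ)))
      linarith [hmul]
  have hlow : -(Hq * R) ≤ ∑ i, (D.avee i : ℚ) * (D.coroot i lam : ℚ) * r i := by
    have h1 := Finset.sum_le_sum fun i (_ : i ∈ Finset.univ) => hlowpt i
    have h2 : ∑ i, -((D.avee i : ℚ) * ((|D.coroot i lam| : ℤ) : ℚ) * R)
        = -((H : ℚ) * R) := by
      rw [Finset.sum_neg_distrib, ← Finset.sum_mul]
      congr 2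
      rw [hH']
      push_cast
      rfl
    rw [h2] at h1
    have h3 : (H : ℚ) ≤ Hq := by rw [hHq']; linarith
    have h4 := mul_le_mul_of_nonneg_right h3 hRge
    linarith [h1, h4]
  have hQup : (1/2) * (∑ i, ∑ j,
      (-((D.avee i : ℚ) * (D.a i j : ℚ) * (D.apos j : ℚ))) * (r i - r j)^2)
      ≤ 2 * (Hq * R) := by
    have hmk0 : 0 ≤ m * k := mul_nonneg hm0 (le_trans zero_le_one hk1)
    linarith [Sfin, hlow, hmk0]
  have hmk : m ≤ Hq * R := by
    have h5 : m * 1 ≤ m * k := mul_le_mul_of_nonneg_left hk1 hm0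
    linarith [Sfin, hlow, hQr0, h5]
  -- R is bounded
  have hRle : R ≤ R0 := by
    rcases le_or_gt R 0 with hR | hRpos
    · linarith
    · have hzero : r imin = 0 := by simp only [hr', hm', sub_self]
      obtain ⟨i₁, j₁, hne, hedge, hgap⟩ := D.gap r hzero hrR hR'.symm hRpos
      rw [← hn'] at hgap
      have hgapnn : 0 ≤ R / (n : ℚ) := div_nonneg hRge (le_of_lt hnq)
      have hterm : (R / (n : ℚ))^2 ≤ (r i₁ - r j₁)^2 := by
        calc (R / (n : ℚ))^2 ≤ |r i₁ - r j₁|^2 := by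
              exact pow_le_pow_left₀ hgapnn hgap 2
          _ = (r i₁ - r j₁)^2 := sq_abs _
      have hw1 : (1 : ℚ) ≤ -((D.avee i₁ : ℚ) * (D.a i₁ j₁ : ℚ) * (D.apos j₁ : ℚ)) := by
        have h1 : D.avee i₁ * D.a i₁ j₁ * D.apos j₁ ≤ -1 := by
          have e1 := D.offdiag_nonpos i₁ j₁ hne
          have e2 := D.avee_pos i₁
          have e3 := D.apos_pos j₁
          have e4 : D.a i₁ j₁ ≤ -1 := by omega
          have m1 : (1:ℤ) * 1 ≤ D.avee i₁ * (-D.a i₁ j₁) :=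
            mul_le_mul (by omega) (by omega) (by omega) (by omega)
          have m2 : (1:ℤ) * 1 ≤ (D.avee i₁ * (-D.a i₁ j₁)) * D.apos j₁ :=
            mul_le_mul (by linarith) (by omega) (by omega) (by linarith)
          linarith [m2]
        have : ((D.avee i₁ * D.a i₁ j₁ * D.apos j₁ : ℤ) : ℚ) ≤ -1 := by exact_mod_cast h1
        push_cast at this
        linarith
      have hedge' : D.a j₁ i₁ ≠ 0 := fun h => hedge ((D.zero_iff i₁ j₁).mpr h)
      have hw2 : (1 : ℚ) ≤ -((D.avee j₁ : ℚ) * (D.a j₁ i₁ : ℚ) * (D.apos i₁ : ℚ)) := by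
        have h1 : D.avee j₁ * D.a j₁ i₁ * D.apos i₁ ≤ -1 := by
          have e1 := D.offdiag_nonpos j₁ i₁ (Ne.symm hne)
          have e2 := D.avee_pos j₁
          have e3 := D.apos_pos i₁
          have e4 : D.a j₁ i₁ ≤ -1 := by omega
          have m1 : (1:ℤ) * 1 ≤ D.avee j₁ * (-D.a j₁ i₁) :=
            mul_le_mul (by omega) (by omega) (by omega) (by omega)
          have m2 : (1:ℤ) * 1 ≤ (D.avee j₁ * (-D.a j₁ i₁)) * D.apos i₁ :=
            mul_le_mul (by linarith) (by omega) (by omega) (by linarith)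
          linarith [m2]
        have : ((D.avee j₁ * D.a j₁ i₁ * D.apos i₁ : ℤ) : ℚ) ≤ -1 := by exact_mod_cast h1
        push_cast at this
        linarith
      have hinner1 : (-((D.avee i₁ : ℚ) * (D.a i₁ j₁ : ℚ) * (D.apos j₁ : ℚ)))
            * (r i₁ - r j₁)^2
          ≤ ∑ q, (-((D.avee i₁ : ℚ) * (D.a i₁ q : ℚ) * (D.apos q : ℚ))) * (r i₁ - r q)^2 :=
        Finset.single_le_sum (fun q _ => hT0 i₁ q) (Finset.mem_univ j₁)
      have hinner2 : (-((D.avee j₁ : ℚ) * (D.a j₁ i₁ : ℚ) * (D.apos i₁ : ℚ)))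
            * (r j₁ - r i₁)^2
          ≤ ∑ q, (-((D.avee j₁ : ℚ) * (D.a j₁ q : ℚ) * (D.apos q : ℚ))) * (r j₁ - r q)^2 :=
        Finset.single_le_sum (fun q _ => hT0 j₁ q) (Finset.mem_univ i₁)
      have houter : (∑ q, (-((D.avee i₁ : ℚ) * (D.a i₁ q : ℚ) * (D.apos q : ℚ)))
              * (r i₁ - r q)^2)
            + ∑ q, (-((D.avee j₁ : ℚ) * (D.a j₁ q : ℚ) * (D.apos q : ℚ))) * (r j₁ - r q)^2
          ≤ ∑ i, ∑ j, (-((D.avee i : ℚ) * (D.a i j : ℚ) * (D.apos j : ℚ))) * (r i - r j)^2 := by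
        have hsub : (∑ i ∈ ({i₁, j₁} : Finset I),
              ∑ q, (-((D.avee i : ℚ) * (D.a i q : ℚ) * (D.apos q : ℚ))) * (r i - r q)^2)
            ≤ ∑ i, ∑ q, (-((D.avee i : ℚ) * (D.a i q : ℚ) * (D.apos q : ℚ))) * (r i - r q)^2 :=
          Finset.sum_le_sum_of_subset_of_nonneg (Finset.subset_univ _)
            (fun i _ _ => Finset.sum_nonneg fun q _ => hT0 i q)
        rw [Finset.sum_pair hne] at hsub
        exact hsub
      have hsqswap : (r j₁ - r i₁)^2 = (r i₁ - r j₁)^2 := by ring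
      have hQlow : (R / (n : ℚ))^2 ≤ (1/2) * (∑ i, ∑ j,
          (-((D.avee i : ℚ) * (D.a i j : ℚ) * (D.apos j : ℚ))) * (r i - r j)^2) := by
        rw [hsqswap] at hinner2
        have k1 : (R / (n : ℚ))^2
            ≤ (-((D.avee i₁ : ℚ) * (D.a i₁ j₁ : ℚ) * (D.apos j₁ : ℚ))) * (r i₁ - r j₁)^2 :=
          le_trans hterm (le_mul_of_one_le_left (sq_nonneg _) hw1)
        have k2 : (R / (n : ℚ))^2
            ≤ (-((D.avee j₁ : ℚ) * (D.a j₁ i₁ : ℚ) * (D.apos i₁ : ℚ))) * (r i₁ - r j₁)^2 :=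
          le_trans hterm (le_mul_of_one_le_left (sq_nonneg _) hw2)
        have hsum2 := add_le_add (le_trans k1 hinner1) (le_trans k2 hinner2)
        have htot := le_trans hsum2 houter
        linarith [htot]
      have hup2 : (R / (n : ℚ))^2 ≤ 2 * (Hq * R) := le_trans hQlow hQup
      have he : (R / (n : ℚ))^2 * (n : ℚ)^2 = R^2 := by
        field_simp
      have hsq : R^2 ≤ 2 * Hq * R * (n : ℚ)^2 := by
        have := mul_le_mul_of_nonneg_right hup2 (le_of_lt (by positivity : (0:ℚ) < (n:ℚ)^2))
        rw [he] at this
        linarith [this]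
      have hsq' : R * R ≤ R0 * R := by rw [hR0']; linarith [hsq]
      exact le_of_mul_le_mul_right hsq' hRpos
  have hmR0 : m ≤ Hq * R0 :=
    le_trans hmk (mul_le_mul_of_nonneg_left hRle (le_of_lt hHqpos))
  -- conclude
  have hfin1 : ((∑ i, z i : ℤ) : ℚ) = ∑ i, (D.apos i : ℚ) * (m + r i) := by
    push_cast
    exact Finset.sum_congr rfl fun i _ => hzeq i
  have hfin2 : ∑ i, (D.apos i : ℚ) * (m + r i) ≤ Sa * (m + R) := by
    rw [hSa', Finset.sum_mul]
    refine Finset.sum_le_sum fun i _ => ?_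
    exact mul_le_mul_of_nonneg_left (by linarith [hrR i]) (le_of_lt (D.aposq_pos i))
  have hfin3 : Sa * (m + R) ≤ Sa * (Hq * R0 + R0) := by
    apply mul_le_mul_of_nonneg_left _ hSa0
    linarith [hmR0, hRle]
  rw [hfin1]
  linarith [hfin2, hfin3]

lemma escalate (lam : P I)
    (hreg : ∀ w ∈ D.weyl, ∀ i, D.coroot i (w lam) ≠ 0)
    (hks : D.cpair lam < D.kstar) :
    ∀ N : ℕ, ∃ w ∈ D.weyl, (∀ i, lam.2 i ≤ (w lam).2 i) ∧
      (N : ℤ) ≤ ∑ i, ((w lam).2 i - lam.2 i) := by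
  intro N
  induction N with
  | zero =>
      refine ⟨1, one_mem _, ?_, ?_⟩
      · intro i; exact le_refl _
      · show ((0:ℕ):ℤ) ≤ ∑ i, (lam.2 i - lam.2 i); simp
  | succ N ih =>
      obtain ⟨w, hw, hge, hsum⟩ := ih
      set mu := w lam with hmu
      have hcp : D.cpair mu = D.cpair lam := D.cpair_weyl w hw lam
      have hex : ∃ j, D.coroot j mu < 0 := by
        by_contra hno
        push_neg at hno
        have hpos : ∀ j, 1 ≤ D.coroot j mu := by
          intro j
          have h1 : D.coroot j mu ≠ 0 := by rw [hmu]; exact hreg w hw j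
          have h2 := hno j
          omega
        have hbig : D.kstar ≤ D.cpair mu := by
          rw [cpair, kstar]
          refine Finset.sum_le_sum fun i _ => ?_
          exact le_mul_of_one_le_right (le_of_lt (D.avee_pos i)) (hpos i)
        omega
      obtain ⟨j, hj⟩ := hex
      have hmem : D.refl j * w ∈ D.weyl :=
        mul_mem (Subgroup.subset_closure ⟨j, rfl⟩) hw
      have happ : (D.refl j * w) lam = D.refl j mu := rfl
      refine ⟨D.refl j * w, hmem, ?_, ?_⟩
      · intro i
        rw [happ, D.refl_snd]
        have hs : 0 ≤ (Pi.single j 1 : I → ℤ) i := by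
          rw [Pi.single_apply]; split <;> omega
        have hprod : 0 ≤ (-(D.coroot j mu)) * (Pi.single j 1 : I → ℤ) i :=
          mul_nonneg (by omega) hs
        linarith [hge i, hprod]
      · rw [happ]
        have hterm : ∀ i, (D.refl j mu).2 i - lam.2 i
            = (mu.2 i - lam.2 i) + (-(D.coroot j mu)) * (Pi.single j 1 : I → ℤ) i := by
          intro i; rw [D.refl_snd]; ring
        rw [Finset.sum_congr rfl fun i _ => hterm i, Finset.sum_add_distrib]
        have hsing : ∑ i, (-(D.coroot j mu)) * (Pi.single j 1 : I → ℤ) i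
            = -(D.coroot j mu) := by
          rw [← Finset.mul_sum]
          have h1 : ∑ i, (Pi.single j 1 : I → ℤ) i = 1 := by
            rw [Finset.sum_pi_single' j (1 : ℤ)]
            simp
          rw [h1, mul_one]
        rw [hsing]
        have hcor : D.coroot j mu ≤ -1 := by omega
        push_cast
        linarith [hsum, hcor]

lemma main_aux (lam : P I)
    (hreg : ∀ w ∈ D.weyl, ∀ i, D.coroot i (w lam) ≠ 0)
    (hk : 0 < D.cpair lam) (hks : D.cpair lam < D.kstar) : False := by
  obtain ⟨B, hB⟩ := D.key_bound lam hk
  obtain ⟨w, hw, hge, hsum⟩ := D.escalate lam hreg hks (Nat.ceil (max B 0) + 1)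
  have h1 := hB w hw hge
  have hc1 : ((Nat.ceil (max B 0) + 1 : ℕ) : ℚ) ≤ B := by
    calc ((Nat.ceil (max B 0) + 1 : ℕ) : ℚ)
        ≤ ((∑ i, ((w lam).2 i - lam.2 i) : ℤ) : ℚ) := by exact_mod_cast hsum
      _ ≤ B := h1
  have hc2 : B ≤ ((Nat.ceil (max B 0) : ℕ) : ℚ) :=
    le_trans (le_max_left _ _) (Nat.le_ceil _)
  push_cast at hc1
  linarith

end AffineData

/-- If `λ ∈ P` satisfies `0 < |⟨c,λ⟩| < κ*` then `λ` is not regular: there exist `w ∈ W`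
and `i ∈ I` with `⟨h_i, wλ⟩ = 0`. -/
theorem not_regular_of_small_level (D : AffineData I) (lam : P I)
    (h1 : 0 < |D.cpair lam|) (h2 : |D.cpair lam| < D.kstar) :
    ∃ w ∈ D.weyl, ∃ i : I, D.coroot i (w lam) = 0 := by
  by_contra hcon
  push_neg at hcon
  have hne : D.cpair lam ≠ 0 := by
    intro h
    rw [h] at h1
    simp at h1
  rcases lt_or_gt_of_ne hne with hneg | hpos
  · refine D.main_aux (-lam) ?_ ?_ ?_
    · intro w hw i hzero
      have hwneg : w (-lam) = -(w lam) := map_neg w lam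
      rw [hwneg, D.coroot_neg] at hzero
      exact hcon w hw i (by omega)
    · rw [D.cpair_neg]; omega
    · rw [D.cpair_neg]
      rw [abs_of_neg hneg] at h2
      omega
  · refine D.main_aux lam hcon hpos ?_
    rw [abs_of_pos hpos] at h2
    exact h2

end AffineKM
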